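/- Let A be a layered automaton over a finite alphabet Σ, let x be an odd priority, p a leaf state, and suppose the infinite word w = u·w̃ admits a run in ⟦A⟧ of the form p →u q →w̃, where every transition along u has priority ≥ x and every transition along the infinite run over w̃ has priority ≥ x+1. Then for every u₀ ∈ Σ*, every longest suffix resolver for Eve initialised to u₀ ensures that on every run over w from p consistent with it, eventually all transitions have priority ≥ x+1. -/

import Mathlib

open scoped Classical

noncomputable section

/-! ### Infinite words and the parity condition -/

/-- The minimal value occurring infinitely often in a sequence of priorities;
for (eventually) bounded sequences this is the `liminf`. -/
def minInfOften (pi : ℕ → ℕ) : ℕ := sInf {x : ℕ | ∀ N : ℕ, ∃ n : ℕ, N ≤ n ∧ pi n = x}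

/-- The (min-)parity acceptance condition: the liminf of the priorities is even. -/
def ParityAccept (pi : ℕ → ℕ) : Prop := Even (minInfOften pi)

/-- Prepend a finite word to an infinite word. -/
def prependW {α : Type} (u : List α) (w : ℕ → α) : ℕ → α := fun i =>
  if h : i < u.length then u.get ⟨i, h⟩ else w (i - u.length)

/-- The prefix of length `n` of an infinite word, as a list. -/
def wordPrefix {α : Type} (w : ℕ → α) (n : ℕ) : List α := List.ofFn (fun i : Fin n => w i)

/-- Drop the first `n` letters of an infinite word. -/
def wordDrop {α : Type} (w : ℕ → α) (n : ℕ) : ℕ → α := fun i => w (n + i)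

/-- The periodic infinite word `v^ω` (junk if `v = []`). -/
def perWord {α : Type} [Inhabited α] (v : List α) : ℕ → α := fun i => v.getD (i % v.length) default

/-! ### Layered automata -/

/-- A layered automaton over the alphabet `α` with `d` layers.  The (disjoint) layers
are encoded by the function `layer : Q → [1,d]`; each layer is a deterministic
transition system (partial transition function `δ`, which stays inside the layer);
`μ` sends each state of layer `x+1` to its parent in layer `x` (and is the identity
on layer `1`) and is a morphism of transition systems; layer `1` is complete, carries
the initial state, and all its states are reachable from the initial state. -/
structure Layered (Q α : Type) (d : ℕ) where
  layer : Q → ℕ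
  layer_pos : ∀ q, 1 ≤ layer q
  layer_le : ∀ q, layer q ≤ d
  δ : Q → α → Option Q
  δ_layer : ∀ q a q', δ q a = some q' → layer q' = layer q
  μ : Q → Q
  μ_layer : ∀ q, 1 < layer q → layer (μ q) + 1 = layer q
  μ_id : ∀ q, layer q = 1 → μ q = q
  μ_morph : ∀ q a q', 1 < layer q → δ q a = some q' → δ (μ q) a = some (μ q')
  init : Q
  init_layer : layer init = 1
  complete1 : ∀ q a, layer q = 1 → (δ q a).isSome = true
  reach1 : ∀ q, layer q = 1 →
    Relation.ReflTransGen (fun p p' => layer p = 1 ∧ ∃ a, δ p a = some p') init q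

namespace Layered

variable {Q R α : Type} {d d' : ℕ}

/-- The run of the (deterministic) layer transition systems on a finite word. -/
def runList (A : Layered Q α d) : Q → List α → Option Q
  | q, [] => some q
  | q, a :: u =>
    match A.δ q a with
    | some q' => runList A q' u
    | none => none

/-- `μ̂_x q`: the ancestor of `q` in layer `x` (image under the composed morphisms). -/
def muHat (A : Layered Q α d) (x : ℕ) (q : Q) : Q := (A.μ)^[A.layer q - x] q

/-- A leaf state: a state that is not in the image of any of the morphisms `μ_x`. -/
def IsLeaf (A : Layered Q α d) (q : Q) : Prop := ∀ p, 1 < A.layer p → A.μ p ≠ q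

/-- `layer(q,a)`: the largest layer `x ≤ layer q` in which `δ_x (μ̂_x q) a` is defined. -/
def layerOf (A : Layered Q α d) (q : Q) (a : α) : ℕ :=
  Nat.findGreatest (fun x => (A.δ (A.muHat x q) a).isSome = true) (A.layer q)

/-- A state `p` is an ancestor of `q`. -/
def IsAncestor (A : Layered Q α d) (p q : Q) : Prop :=
  A.layer p ≤ A.layer q ∧ A.muHat (A.layer p) q = p

/-! #### Safe languages and strong acceptance -/

/-- Membership of a finite word in the `x`-safe language of `q`. -/
def SafeFin (A : Layered Q α d) (x : ℕ) (q : Q) (u : List α) : Prop :=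
  (A.runList (A.muHat x q) u).isSome = true

/-- Membership of an infinite word in the `x`-safe language of `q`. -/
def SafeInf (A : Layered Q α d) (x : ℕ) (q : Q) (w : ℕ → α) : Prop :=
  ∀ n : ℕ, A.SafeFin x q (wordPrefix w n)

/-- `w` is strongly accepted by the state `p` (which lies in the even layer `x = layer p`):
`w` is `x`-safe from `p` and no decomposition `w = u·w'` admits a state `p'` of layer `x+1`
with a `u`-run from `p` to the parent of `p'` in `T_x` such that `w'` is `(x+1)`-safe from `p'`. -/
def StronglyAcc (A : Layered Q α d) (p : Q) (w : ℕ → α) : Prop :=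
  Even (A.layer p) ∧ A.SafeInf (A.layer p) p w ∧
  ∀ (n : ℕ) (p' : Q), A.layer p' = A.layer p + 1 →
    A.runList p (wordPrefix w n) = some (A.μ p') →
    ¬ A.SafeInf (A.layer p') p' (wordDrop w n)

/-- `w` is strongly rejected by `p` (lying in an odd layer). -/
def StronglyRej (A : Layered Q α d) (p : Q) (w : ℕ → α) : Prop :=
  Odd (A.layer p) ∧ A.SafeInf (A.layer p) p w ∧
  ∀ (n : ℕ) (p' : Q), A.layer p' = A.layer p + 1 →
    A.runList p (wordPrefix w n) = some (A.μ p') →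
    ¬ A.SafeInf (A.layer p') p' (wordDrop w n)

/-- Consistency: no two states with the same layer-1 ancestor strongly accept
resp. strongly reject a common infinite word. -/
def Consistent (A : Layered Q α d) : Prop :=
  ¬ ∃ (p p' : Q) (w : ℕ → α), A.muHat 1 p = A.muHat 1 p' ∧
      A.StronglyAcc p w ∧ A.StronglyRej p' w

/-- `w` is ultimately safe in layer `x`, for the automaton started in the
layer-1 state `q0`. -/
def UltSafeFrom (A : Layered Q α d) (q0 : Q) (x : ℕ) (w : ℕ → α) : Prop :=
  ∃ (n : ℕ) (p : Q), A.layer p = x ∧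
    A.runList q0 (wordPrefix w n) = some (A.muHat 1 p) ∧
    A.SafeInf x p (wordDrop w n)

/-- Layered acceptance from `q0`: the maximal layer in which `w` is ultimately safe is even. -/
def LayeredAcceptFrom (A : Layered Q α d) (q0 : Q) (w : ℕ → α) : Prop :=
  ∃ x : ℕ, Even x ∧ A.UltSafeFrom q0 x w ∧ ∀ y : ℕ, A.UltSafeFrom q0 y w → y ≤ x

/-- Layered rejection from `q0`: the maximal layer in which `w` is ultimately safe is odd. -/
def LayeredRejectFrom (A : Layered Q α d) (q0 : Q) (w : ℕ → α) : Prop :=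
  ∃ x : ℕ, Odd x ∧ A.UltSafeFrom q0 x w ∧ ∀ y : ℕ, A.UltSafeFrom q0 y w → y ≤ x

/-! #### The semantics automaton `⟦A⟧` (a simple-by-priorities alternating parity automaton) -/

/-- The priority of the letter `a` in the state `q` of `⟦A⟧`. -/
def semPrio (A : Layered Q α d) (q : Q) (a : α) : ℕ := A.layerOf q a

/-- The transitions of `⟦A⟧` (between leaf states): `q —a→ q'` iff, for
`x = layer(q,a)`, we have `δ_x (μ̂_x q) a = μ̂_x q'`; the transition carries priority `x`. -/
def semStep (A : Layered Q α d) (q : Q) (a : α) (q' : Q) : Prop :=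
  A.IsLeaf q' ∧ A.δ (A.muHat (A.layerOf q a) q) a = some (A.muHat (A.layerOf q a) q')

/-- Runs of `⟦A⟧` over the infinite word `w`, starting in `p`. -/
def IsSemRun (A : Layered Q α d) (w : ℕ → α) (p : Q) (ρ : ℕ → Q) : Prop :=
  ρ 0 = p ∧ ∀ i : ℕ, A.semStep (ρ i) (w i) (ρ (i + 1))

/-- The sequence of priorities produced by a run of `⟦A⟧` over `w`. -/
def runPrios (A : Layered Q α d) (w : ℕ → α) (ρ : ℕ → Q) : ℕ → ℕ :=
  fun i => A.semPrio (ρ i) (w i)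

/-- A resolver for Eve in `⟦A⟧`: given the history (the finite run so far, as a list of
(state, letter) pairs), the current state and a letter of odd priority, it picks a successor. -/
def EveResolver (A : Layered Q α d) (σ : List (Q × α) → Q → α → Q) : Prop :=
  ∀ (h : List (Q × α)) (q : Q) (a : α), Odd (A.semPrio q a) → A.semStep q a (σ h q a)

/-- A resolver for Adam in `⟦A⟧` (resolving the even-priority steps). -/
def AdamResolver (A : Layered Q α d) (τ : List (Q × α) → Q → α → Q) : Prop :=
  ∀ (h : List (Q × α)) (q : Q) (a : α), Even (A.semPrio q a) → A.semStep q a (τ h q a)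

/-- A run is consistent with the Eve-resolver `σ`: every odd-priority step follows `σ`. -/
def ConsEve (A : Layered Q α d) (σ : List (Q × α) → Q → α → Q) (w : ℕ → α) (ρ : ℕ → Q) : Prop :=
  ∀ i : ℕ, Odd (A.semPrio (ρ i) (w i)) →
    ρ (i + 1) = σ (List.ofFn fun j : Fin i => (ρ (j : ℕ), w (j : ℕ))) (ρ i) (w i)

/-- A run is consistent with the Adam-resolver `τ`: every even-priority step follows `τ`. -/
def ConsAdam (A : Layered Q α d) (τ : List (Q × α) → Q → α → Q) (w : ℕ → α) (ρ : ℕ → Q) : Prop :=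
  ∀ i : ℕ, Even (A.semPrio (ρ i) (w i)) →
    ρ (i + 1) = τ (List.ofFn fun j : Fin i => (ρ (j : ℕ), w (j : ℕ))) (ρ i) (w i)

/-- Acceptance of `w` by `⟦A⟧` from the (leaf) state `p`: Eve has a winning strategy
in the game `G(⟦A⟧,w)`, i.e. a resolver all of whose consistent runs satisfy parity. -/
def SemAccept (A : Layered Q α d) (p : Q) (w : ℕ → α) : Prop :=
  ∃ σ : List (Q × α) → Q → α → Q, A.EveResolver σ ∧
    ∀ ρ : ℕ → Q, A.IsSemRun w p ρ → A.ConsEve σ w ρ → ParityAccept (A.runPrios w ρ)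

/-- Uniform semantic determinism: leaf states with the same layer-1 ancestor
recognise the same language in `⟦A⟧`. -/
def UnifSD (A : Layered Q α d) : Prop :=
  ∀ p q : Q, A.IsLeaf p → A.IsLeaf q → A.muHat 1 p = A.muHat 1 q →
    ∀ w : ℕ → α, (A.SemAccept p w ↔ A.SemAccept q w)

/-! #### Longest suffix resolvers -/

/-- `v` is a suffix-witness to `r`: the layer of `r` has a run labelled `v` ending in `r`. -/
def suffixReaches (A : Layered Q α d) (r : Q) (v : List α) : Prop :=
  ∃ p : Q, A.layer p = A.layer r ∧ A.runList p v = some r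

/-- The length of the longest suffix `v` of `u` such that the layer of `r` has a
run labelled `v` ending in `r`. -/
def longestSuffixLen (A : Layered Q α d) (u : List α) (r : Q) : ℕ :=
  Nat.findGreatest (fun k => k ≤ u.length ∧ A.suffixReaches r (u.drop (u.length - k))) u.length

/-- A longest suffix resolver for Eve, initialised to `u0`: a valid Eve-resolver that,
at a step of odd priority `x` after having read `v`, moves to an `a`-successor `q'`
maximising the length of the longest `(x+1)`-suffix of `u0·v·a` to `μ̂_{x+1} q'`. -/
def IsLongestSuffixResolverE (A : Layered Q α d) (u0 : List α)
    (σ : List (Q × α) → Q → α → Q) : Prop :=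
  A.EveResolver σ ∧
  ∀ (h : List (Q × α)) (q : Q) (a : α), Odd (A.semPrio q a) →
    ∀ q' : Q, A.semStep q a q' →
      A.longestSuffixLen (u0 ++ h.map Prod.snd ++ [a]) (A.muHat (A.semPrio q a + 1) q') ≤
      A.longestSuffixLen (u0 ++ h.map Prod.snd ++ [a]) (A.muHat (A.semPrio q a + 1) (σ h q a))

/-- A longest suffix resolver for Adam, initialised to `u0` (symmetric, for even priorities). -/
def IsLongestSuffixResolverA (A : Layered Q α d) (u0 : List α)
    (τ : List (Q × α) → Q → α → Q) : Prop :=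
  A.AdamResolver τ ∧
  ∀ (h : List (Q × α)) (q : Q) (a : α), Even (A.semPrio q a) →
    ∀ q' : Q, A.semStep q a q' →
      A.longestSuffixLen (u0 ++ h.map Prod.snd ++ [a]) (A.muHat (A.semPrio q a + 1) q') ≤
      A.longestSuffixLen (u0 ++ h.map Prod.snd ++ [a]) (A.muHat (A.semPrio q a + 1) (τ h q a))

/-! #### The random walk on `⟦A⟧` -/

/-- The uniform step probability of the random walk of `⟦A⟧`. -/
def stepProb (A : Layered Q α d) (q : Q) (a : α) (q' : Q) : ENNReal :=
  if A.semStep q a q' then ((Nat.card {p : Q // A.semStep q a p} : ENNReal))⁻¹ else 0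

/-- `m` is the Markov measure of the random walk of `⟦A⟧` over the word `w` started at `p`:
a probability measure on `ℕ → Q` whose cylinder probabilities are the products of the
uniform step probabilities. -/
def IsWalkMeasure [MeasurableSpace Q] (A : Layered Q α d) (w : ℕ → α) (p : Q)
    (m : MeasureTheory.Measure (ℕ → Q)) : Prop :=
  MeasureTheory.IsProbabilityMeasure m ∧
  ∀ (n : ℕ) (s : Fin (n + 1) → Q),
    m {ρ : ℕ → Q | ∀ i : Fin (n + 1), ρ (i : ℕ) = s i} =
      (if s 0 = p then 1 else 0) *
        ∏ i : Fin n, A.stepProb (s i.castSucc) (w (i : ℕ)) (s i.succ)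

/-! #### Normal form, centrality, safe minimality, central sequences -/

/-- Normal form: (N1) every layer `x ≥ 2` is a union of non-trivial SCCs, and
(N2) the safe language of every child is strictly smaller than that of its parent. -/
def NormalForm (A : Layered Q α d) : Prop :=
  ∀ q : Q, 2 ≤ A.layer q →
    (∀ (u : List α) (q' : Q), A.runList q u = some q' →
      ∃ v : List α, v ≠ [] ∧ A.runList q' v = some q) ∧
    (∀ p : Q, 1 < A.layer p → A.μ p = q →
      ∃ u : List α, (A.runList q u).isSome = true ∧ A.runList p u = none)

/-- Inclusion of `x`-safe languages. -/
def SafeLE (A : Layered Q α d) (x : ℕ) (p q : Q) : Prop :=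
  (∀ u : List α, A.SafeFin x p u → A.SafeFin x q u) ∧
  (∀ w : ℕ → α, A.SafeInf x p w → A.SafeInf x q w)

/-- Centralised: siblings (same parent) whose safe languages are included,
lie in the same SCC of their layer. -/
def Centralised (A : Layered Q α d) : Prop :=
  ∀ p q : Q, 2 ≤ A.layer p → A.layer q = A.layer p →
    A.muHat (A.layer p - 1) p = A.muHat (A.layer p - 1) q →
    A.SafeLE (A.layer p) p q →
    (∃ u : List α, A.runList p u = some q) ∧ (∃ v : List α, A.runList q v = some p)

/-- `L(p) = L(q)`: all leaves above (the layer-1 ancestor of) `p` and all leaves above `q`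
recognise the same language in `⟦A⟧`. -/
def LangEq1 (A : Layered Q α d) (p q : Q) : Prop :=
  ∀ l l' : Q, A.IsLeaf l → A.IsLeaf l' → A.muHat 1 l = A.muHat 1 p →
    A.muHat 1 l' = A.muHat 1 q → ∀ w : ℕ → α, (A.SemAccept l w ↔ A.SemAccept l' w)

/-- The equivalence `p ≈_x q`: language equivalence together with equality of all
`y`-safe languages for `2 ≤ y ≤ x`. -/
def ApproxEq (A : Layered Q α d) (x : ℕ) (p q : Q) : Prop :=
  A.LangEq1 p q ∧ ∀ y : ℕ, 2 ≤ y → y ≤ x →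
    ((∀ u : List α, A.SafeFin y p u ↔ A.SafeFin y q u) ∧
     (∀ w : ℕ → α, A.SafeInf y p w ↔ A.SafeInf y q w))

/-- Safe minimality: `≈_x`-equivalent states of the same layer are equal. -/
def SafeMinimal (A : Layered Q α d) : Prop :=
  ∀ p q : Q, A.layer p = A.layer q → A.ApproxEq (A.layer p) p q → p = q

/-- `z` is a central sequence for the state `p` (of layer `x = layer p`). -/
def IsCentralSeq (A : Layered Q α d) (p : Q) (z : List α) : Prop :=
  z ≠ [] ∧ A.runList p z = some p ∧
  (∀ q : Q, A.layer q = A.layer p →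
    A.muHat (A.layer p - 1) q = A.muHat (A.layer p - 1) p →
    (A.runList q z = some p ∨ A.runList q z = none)) ∧
  (∀ q' : Q, A.layer q' = A.layer p + 1 →
    A.muHat (A.layer p - 1) q' = A.muHat (A.layer p - 1) p →
    A.runList q' z = none)

end Layered

/-! ### Morphisms of layered automata -/

/-- A morphism of layered automata. -/
structure IsLayMorphism {Q R α : Type} {d d' : ℕ} (A : Layered Q α d) (B : Layered R α d')
    (φ : Q → R) : Prop where
  map_init : φ A.init = B.init
  map_step : ∀ q a q', A.δ q a = some q' → B.δ (φ q) a = some (φ q')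
  map_anc : ∀ p q, A.IsAncestor p q → B.IsAncestor (φ p) (φ q)

/-- A strong morphism of layered automata additionally preserves non-transitions. -/
def IsStrongLayMorphism {Q R α : Type} {d d' : ℕ} (A : Layered Q α d) (B : Layered R α d')
    (φ : Q → R) : Prop :=
  IsLayMorphism A B φ ∧ ∀ q a, A.δ q a = none → B.δ (φ q) a = none

/-- An isomorphism of layered automata: a bijection on states that restricts to
isomorphisms of the layer transition systems, preserves the initial state, and
commutes with the morphisms `μ`. -/
structure IsLayIso {Q R α : Type} {d d' : ℕ} (A : Layered Q α d) (B : Layered R α d')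
    (φ : Q ≃ R) : Prop where
  map_layer : ∀ q, B.layer (φ q) = A.layer q
  map_init : φ A.init = B.init
  map_mu : ∀ q, φ (A.μ q) = B.μ (φ q)
  map_step : ∀ q a, (A.δ q a).map φ = B.δ (φ q) a

/-- `L(⟦A⟧) = L(⟦B⟧)`: the semantics automata (with any choice of initial leaf states
above the respective initial states) accept the same infinite words. -/
def SemLangEq {Q R α : Type} {d d' : ℕ} (A : Layered Q α d) (B : Layered R α d') : Prop :=
  ∀ (p : Q) (q : R), A.IsLeaf p → A.muHat 1 p = A.init → B.IsLeaf q → B.muHat 1 q = B.init →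
    ∀ w : ℕ → α, (A.SemAccept p w ↔ B.SemAccept q w)

/-! ### Deterministic parity automata -/

/-- A deterministic parity automaton over `α` with priorities in `[1,d]`. -/
structure DPA (Q α : Type) (d : ℕ) where
  init : Q
  next : Q → α → Q
  prio : Q → α → ℕ
  prio_pos : ∀ q a, 1 ≤ prio q a
  prio_le : ∀ q a, prio q a ≤ d

namespace DPA

variable {Q α : Type} {d : ℕ}

/-- The unique run of a DPA on an infinite word. -/
def run (B : DPA Q α d) (w : ℕ → α) : ℕ → Q
  | 0 => B.init
  | n + 1 => B.next (run B w n) (w n)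

/-- Acceptance by a DPA: the priorities along the unique run satisfy parity. -/
def Accepts (B : DPA Q α d) (w : ℕ → α) : Prop :=
  ParityAccept (fun i => B.prio (B.run w i) (w i))

end DPA

/-- `L` is ω-regular: recognised by some deterministic parity automaton. -/
def IsOmegaRegular {α : Type} (L : Set (ℕ → α)) : Prop :=
  ∃ (n d : ℕ) (B : DPA (Fin n) α d), ∀ w : ℕ → α, w ∈ L ↔ B.Accepts w

/-! ### Nondeterministic coBüchi automata -/

/-- A (complete) nondeterministic coBüchi automaton: transitions carry priorities in `{1,2}`. -/
structure NCA (Q α : Type) where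
  init : Q
  trans : Q → α → ℕ → Q → Prop
  prio_mem : ∀ q a x q', trans q a x q' → x = 1 ∨ x = 2
  complete : ∀ q a, ∃ x q', trans q a x q'

namespace NCA

variable {Q α : Type}

/-- Nondeterministic acceptance from the state `q`. -/
def AcceptFrom (B : NCA Q α) (q : Q) (w : ℕ → α) : Prop :=
  ∃ (ρ : ℕ → Q) (pri : ℕ → ℕ), ρ 0 = q ∧
    (∀ i : ℕ, B.trans (ρ i) (w i) (pri i) (ρ (i + 1))) ∧ ParityAccept pri

/-- Semantic determinism: every `a`-successor of `p` recognises `a⁻¹ L(p)`. -/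
def SemDet (B : NCA Q α) : Prop :=
  ∀ p a x q, B.trans p a x q →
    ∀ w : ℕ → α, (B.AcceptFrom q w ↔ B.AcceptFrom p (prependW [a] w))

/-- Safe determinism: all `a`-transitions from a state carry the same priority, and
there is at most one `a`-transition of priority `2` from each state. -/
def SafeDet (B : NCA Q α) : Prop :=
  (∀ q a x q' x' q'', B.trans q a x q' → B.trans q a x' q'' → x = x') ∧
  (∀ q a q' q'', B.trans q a 2 q' → B.trans q a 2 q'' → q' = q'')

/-- 1-saturation: priority-1 transitions go to all language-equivalent states. -/
def OneSaturated (B : NCA Q α) : Prop :=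
  ∀ q a p p', B.trans q a 1 p →
    (∀ w : ℕ → α, (B.AcceptFrom p' w ↔ B.AcceptFrom p w)) → B.trans q a 1 p'

end NCA

/-! ### Simple-by-priorities alternating parity automata (abstract) -/

/-- A simple-by-priorities alternating parity automaton: a complete transition system
over `α × [1,d]` in which all `a`-transitions from a state carry the same priority. -/
structure SPA (Q α : Type) (d : ℕ) where
  init : Q
  step : Q → α → Q → Prop
  prio : Q → α → ℕ
  prio_pos : ∀ q a, 1 ≤ prio q a
  prio_le : ∀ q a, prio q a ≤ d
  complete : ∀ q a, ∃ q', step q a q'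

/-! ### The congruence on tuples of finite words -/

/-- The data of the congruence at one level (tuples of a fixed length,
represented as reversed lists of components: the head is the last component). -/
structure CongrLevel (α : Type) where
  bot : List (List α) → Prop
  eq : List (List α) → List (List α) → Prop
  ptd : List (List α) → Prop

/-- Concatenate a finite word to the last component of a tuple
(tuples are represented as reversed lists: the head is the last component). -/
def tcat {α : Type} (t : List (List α)) (v : List α) : List (List α) :=
  match t with
  | h :: rest => (h ++ v) :: rest
  | [] => []

/-- Merge the last two components of a tuple. -/
def tmerge {α : Type} (t : List (List α)) : List (List α) :=
  match t with
  | u' :: h :: rest => (h ++ u') :: rest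
  | t' => t'

/-- The congruence data at level `n` (handling tuples of length `n+1`), defined by
recursion on the level, following the inductive definition of `≈ ⊥`, `≈` and `pointed`. -/
def congrData {α : Type} [Inhabited α] (L : Set (ℕ → α)) : ℕ → CongrLevel α
  | 0 =>
    { bot := fun _ => False
      eq := fun t s =>
        match t, s with
        | [u], [v] => ∀ w : ℕ → α, (prependW u w ∈ L ↔ prependW v w ∈ L)
        | _, _ => False
      ptd := fun _ => True }
  | n + 1 =>
    let C := congrData L n
    let bot : List (List α) → Prop := fun t =>
      match t with
      | u' :: ubar =>
        C.bot (tmerge (u' :: ubar)) ∨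
        ∀ w : List α, w ≠ [] → C.eq (tcat (tmerge (u' :: ubar)) w) ubar →
          ((prependW ubar.reverse.flatten (perWord (u' ++ w)) ∈ L) ↔ Even (n + 1))
      | [] => True
    let eq : List (List α) → List (List α) → Prop := fun t s =>
      C.eq (tmerge t) (tmerge s) ∧ ∀ v : List α, (bot (tcat t v) ↔ bot (tcat s v))
    let ptd : List (List α) → Prop := fun t =>
      match t with
      | u' :: ubar =>
        ¬ bot (u' :: ubar) ∧ C.ptd ubar ∧
        ∀ (vbar : List (List α)) (v' : List α), vbar.length = n + 1 → C.ptd vbar →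
          C.eq (tcat vbar v') ubar → ¬ bot ((v' ++ u') :: vbar) →
          eq ((v' ++ u') :: vbar) (u' :: ubar)
      | [] => False
    { bot := bot, eq := eq, ptd := ptd }

/-- `t ≈ ⊥` (for a nonempty tuple `t`, in reversed representation). -/
def TupBot {α : Type} [Inhabited α] (L : Set (ℕ → α)) (t : List (List α)) : Prop :=
  (congrData L (t.length - 1)).bot t

/-- `t ≈ s` (for nonempty tuples of the same length, in reversed representation). -/
def TupEq {α : Type} [Inhabited α] (L : Set (ℕ → α)) (t s : List (List α)) : Prop :=
  t.length = s.length ∧ (congrData L (t.length - 1)).eq t s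

/-- `t` is pointed. -/
def TupPointed {α : Type} [Inhabited α] (L : Set (ℕ → α)) (t : List (List α)) : Prop :=
  (congrData L (t.length - 1)).ptd t

/-- `cls` exhibits `A` as (a copy of) the congruence automaton `A_≈` of `L`: its states
are the `≈`-classes of pointed tuples (the layer being the tuple length), transitions
are given by concatenation in the last component, the initial state is the class of
`(ε)`, and the morphisms are given by merging the last two components. -/
structure IsCongrAut {α : Type} [Inhabited α] (L : Set (ℕ → α)) {Q : Type} {d : ℕ}
    (A : Layered Q α d) (cls : (t : List (List α)) → TupPointed L t → Q) : Prop where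
  surj : ∀ q : Q, ∃ (t : List (List α)) (ht : TupPointed L t), cls t ht = q
  cls_eq : ∀ t ht s hs, cls t ht = cls s hs ↔ TupEq L t s
  layer_eq : ∀ t ht, A.layer (cls t ht) = t.length
  init_eq : ∀ h : TupPointed L [([] : List α)], cls [([] : List α)] h = A.init
  step_some : ∀ t ht (a : α) (h' : TupPointed L (tcat t [a])),
    A.δ (cls t ht) a = some (cls (tcat t [a]) h')
  step_none : ∀ t ht (a : α), TupBot L (tcat t [a]) → A.δ (cls t ht) a = none
  mu_eq : ∀ (u' : List α) (ubar : List (List α)) (h : TupPointed L (u' :: ubar))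
    (h' : TupPointed L (tmerge (u' :: ubar))), ubar ≠ [] →
    A.μ (cls (u' :: ubar) h) = cls (tmerge (u' :: ubar)) h'

end

/-!
Along the reference run all priorities are at least `x`, and two runs of `⟦A⟧` over the same
word agree in layer `y` as long as one of them has priorities `≥ y`; hence every run over `w`
agrees with the reference run in layer `x` and never sees a priority below `x`. Whenever a
`σ`-run sees the odd priority `x` at a position `n ≥ |u|`, the reference run offers Eve a
successor whose `(x+1)`-ancestor is reached by a run of `T_{x+1}` over the letters read since
position `|u₀| + |u|`; as `σ` maximises this suffix, the chosen successor is reached by a run of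
`T_{x+1}` starting at some position `s ≤ |u₀| + |u|` in some state `r`. That deterministic run
then tracks the `σ`-run as long as its priorities stay `≥ x+1` and dies at the next occurrence
of `x`. So distinct occurrences of `x` need distinct pairs `(s, r)`, of which there are finitely
many.
-/

theorem wordPrefix_add {β : Type} (w : ℕ → β) (i k : ℕ) :
    wordPrefix w (i + k) = wordPrefix w i ++ wordPrefix (wordDrop w i) k := by
  simp only [wordPrefix, wordDrop, List.ofFn_add, Fin.val_castLE, Fin.val_natAdd]

theorem wordPrefix_succ {β : Type} (w : ℕ → β) (n : ℕ) :
    wordPrefix w (n + 1) = wordPrefix w n ++ [w n] := by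
  rw [wordPrefix_add]
  rfl

@[simp]
theorem length_wordPrefix {β : Type} (w : ℕ → β) (n : ℕ) : (wordPrefix w n).length = n :=
  List.length_ofFn

namespace Layered

variable {Q α : Type} {d : ℕ} (A : Layered Q α d)

theorem layer_muHat {x : ℕ} (hx : 1 ≤ x) {q : Q} (hq : x ≤ A.layer q) :
    A.layer (A.muHat x q) = x := by
  obtain ⟨k, hk⟩ := Nat.exists_eq_add_of_le hq
  rw [muHat, hk, Nat.add_sub_cancel_left]
  induction k generalizing q with
  | zero => simpa using hk
  | succ k ih =>
    have := A.μ_layer q (by omega)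
    rw [Function.iterate_succ_apply]
    exact ih (by omega) (by omega)

theorem muHat_of_layer_le {x : ℕ} {q : Q} (h : A.layer q ≤ x) : A.muHat x q = q := by
  rw [muHat, Nat.sub_eq_zero_of_le h, Function.iterate_zero_apply]

theorem μ_muHat_succ {x : ℕ} {q : Q} (h : x + 1 ≤ A.layer q) :
    A.μ (A.muHat (x + 1) q) = A.muHat x q := by
  rw [muHat, muHat, show A.layer q - x = A.layer q - (x + 1) + 1 by omega,
    Function.iterate_succ_apply']

theorem IsLeaf.lt_layer {A : Layered Q α d} {q r : Q} (hq : A.IsLeaf q) (hr : 1 < A.layer r)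
    {x : ℕ} (h : A.μ r = A.muHat x q) : x < A.layer q := by
  by_contra! hle
  exact hq r hr (h.trans (A.muHat_of_layer_le hle))

theorem exists_isLeaf_muHat_eq (q : Q) :
    ∃ l, A.IsLeaf l ∧ A.layer q ≤ A.layer l ∧ A.muHat (A.layer q) l = q := by
  by_cases hq : A.IsLeaf q
  · exact ⟨q, hq, le_rfl, A.muHat_of_layer_le le_rfl⟩
  obtain ⟨p, hp, rfl⟩ : ∃ p, 1 < A.layer p ∧ A.μ p = q := by simpa [IsLeaf] using hq
  have hlayer := A.μ_layer p hp
  have := A.layer_le p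
  obtain ⟨l, hl, hpl, hlp⟩ := exists_isLeaf_muHat_eq p
  refine ⟨l, hl, by omega, ?_⟩
  rw [← A.μ_muHat_succ (by omega), hlayer, hlp]
termination_by d - A.layer q

theorem layerOf_le (q : Q) (a : α) : A.layerOf q a ≤ A.layer q :=
  Nat.findGreatest_le _

theorem one_le_layerOf (q : Q) (a : α) : 1 ≤ A.layerOf q a :=
  Nat.le_findGreatest (A.layer_pos q)
    (A.complete1 _ a (A.layer_muHat le_rfl (A.layer_pos q)))

theorem le_layerOf {q : Q} {a : α} {y : ℕ} (hy : y ≤ A.layer q)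
    (h : (A.δ (A.muHat y q) a).isSome) : y ≤ A.layerOf q a :=
  Nat.le_findGreatest hy h

theorem δ_muHat_eq_none {q : Q} {a : α} {y : ℕ} (h : A.layerOf q a < y) (hy : y ≤ A.layer q) :
    A.δ (A.muHat y q) a = none := by
  simpa using Nat.findGreatest_is_greatest h hy

theorem layerOf_le_layer_of_semStep {q q' : Q} {a : α} (h : A.semStep q a q') :
    A.layerOf q a ≤ A.layer q' := by
  by_contra! hlt
  have hlayer := A.δ_layer _ _ _ h.2
  rw [A.muHat_of_layer_le hlt.le,
    A.layer_muHat (A.one_le_layerOf q a) (A.layerOf_le q a)] at hlayer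
  omega

theorem δ_muHat_of_le {q q' : Q} {a : α} {y z : ℕ} (hy : 1 ≤ y) (hyz : y ≤ z)
    (hq : z ≤ A.layer q) (hq' : z ≤ A.layer q')
    (h : A.δ (A.muHat z q) a = some (A.muHat z q')) :
    A.δ (A.muHat y q) a = some (A.muHat y q') := by
  obtain ⟨k, rfl⟩ := Nat.exists_eq_add_of_le hyz
  induction k with
  | zero => exact h
  | succ k ih =>
    have hμ := A.μ_morph _ a _ (by rw [A.layer_muHat (by omega) hq]; omega) h
    rw [← add_assoc, A.μ_muHat_succ (by omega), A.μ_muHat_succ (by omega)] at hμ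
    exact ih (by omega) (by omega) (by omega) hμ

theorem δ_muHat_of_semStep {q q' : Q} {a : α} (h : A.semStep q a q') {y : ℕ} (hy : 1 ≤ y)
    (hya : y ≤ A.layerOf q a) : A.δ (A.muHat y q) a = some (A.muHat y q') :=
  A.δ_muHat_of_le hy hya (A.layerOf_le q a) (A.layerOf_le_layer_of_semStep h) h.2

theorem runList_append (q : Q) (v v' : List α) :
    A.runList q (v ++ v') = (A.runList q v).bind fun r => A.runList r v' := by
  induction v generalizing q with
  | nil => rfl
  | cons a v ih =>
    simp only [List.cons_append, runList]
    cases A.δ q a <;> simp [ih]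

theorem runList_append_singleton (q : Q) (v : List α) (a : α) :
    A.runList q (v ++ [a]) = (A.runList q v).bind fun r => A.δ r a := by
  rw [runList_append]
  congr 1
  funext r
  simp only [runList]
  cases A.δ r a <;> rfl

theorem le_longestSuffixLen {v : List α} {r : Q} {k : ℕ} (hk : k ≤ v.length)
    (h : A.suffixReaches r (v.drop (v.length - k))) : k ≤ A.longestSuffixLen v r :=
  Nat.le_findGreatest hk ⟨hk, h⟩

theorem suffixReaches_longestSuffixLen (v : List α) (r : Q) :
    A.suffixReaches r (v.drop (v.length - A.longestSuffixLen v r)) :=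
  (Nat.findGreatest_spec (P := fun k => k ≤ v.length ∧ A.suffixReaches r (v.drop (v.length - k)))
    (Nat.zero_le _) ⟨Nat.zero_le _, by simpa using ⟨r, rfl, rfl⟩⟩).2

theorem longestSuffixLen_le_length (v : List α) (r : Q) : A.longestSuffixLen v r ≤ v.length :=
  Nat.findGreatest_le _

section Runs

variable {A : Layered Q α d} {w : ℕ → α} {p : Q} {ρ : ℕ → Q} {y : ℕ}

theorem IsSemRun.muHat_eq (hρ : A.IsSemRun w p ρ) {ρ' : ℕ → Q} (hρ' : A.IsSemRun w p ρ')
    (hy : 1 ≤ y) (hprio : ∀ i, y ≤ A.semPrio (ρ' i) (w i)) (n : ℕ) :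
    y ≤ A.layer (ρ n) ∧ A.muHat y (ρ n) = A.muHat y (ρ' n) := by
  induction n with
  | zero =>
    rw [hρ.1, ← hρ'.1]
    exact ⟨(hprio 0).trans (A.layerOf_le _ _), rfl⟩
  | succ n ih =>
    have hstep' := A.δ_muHat_of_semStep (hρ'.2 n) hy (hprio n)
    have hn : y ≤ A.semPrio (ρ n) (w n) := A.le_layerOf ih.1 (by rw [ih.2, hstep']; rfl)
    have hstep := A.δ_muHat_of_semStep (hρ.2 n) hy hn
    rw [ih.2, hstep'] at hstep
    exact ⟨hn.trans (A.layerOf_le_layer_of_semStep (hρ.2 n)), (Option.some.inj hstep).symm⟩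

theorem IsSemRun.le_semPrio (hρ : A.IsSemRun w p ρ) {ρ' : ℕ → Q} (hρ' : A.IsSemRun w p ρ')
    (hy : 1 ≤ y) (hprio : ∀ i, y ≤ A.semPrio (ρ' i) (w i)) (n : ℕ) :
    y ≤ A.semPrio (ρ n) (w n) := by
  obtain ⟨hlayer, heq⟩ := hρ.muHat_eq hρ' hy hprio n
  exact A.le_layerOf hlayer (by rw [heq, A.δ_muHat_of_semStep (hρ'.2 n) hy (hprio n)]; rfl)

theorem IsSemRun.runList_muHat (hρ : A.IsSemRun w p ρ) (hy : 1 ≤ y) {i k : ℕ}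
    (hi : y ≤ A.layer (ρ i)) (hprio : ∀ j < k, y ≤ A.semPrio (ρ (i + j)) (w (i + j))) :
    y ≤ A.layer (ρ (i + k)) ∧
      A.runList (A.muHat y (ρ i)) (wordPrefix (wordDrop w i) k) = some (A.muHat y (ρ (i + k))) := by
  induction k with
  | zero => exact ⟨hi, rfl⟩
  | succ k ih =>
    obtain ⟨-, hrun⟩ := ih fun j hj => hprio j (by omega)
    have hk := hprio k (by omega)
    refine ⟨hk.trans (A.layerOf_le_layer_of_semStep (hρ.2 _)), ?_⟩
    rw [wordPrefix_succ, A.runList_append_singleton, hrun]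
    exact A.δ_muHat_of_semStep (hρ.2 _) hy hk

theorem IsSemRun.le_semPrio_of_isSome_runList (hρ : A.IsSemRun w p ρ) (hy : 1 ≤ y) {i k : ℕ}
    (hi : y ≤ A.layer (ρ i))
    (h : (A.runList (A.muHat y (ρ i)) (wordPrefix (wordDrop w i) k)).isSome) :
    ∀ j < k, y ≤ A.semPrio (ρ (i + j)) (w (i + j)) := by
  induction k with
  | zero => intro j hj; omega
  | succ k ih =>
    rw [wordPrefix_succ, A.runList_append_singleton] at h
    have hprio := ih (by cases hr : A.runList (A.muHat y (ρ i)) (wordPrefix (wordDrop w i) k) <;>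
      simp_all)
    obtain ⟨hlayer, hrun⟩ := hρ.runList_muHat hy hi hprio
    rw [hrun] at h
    intro j hj
    rcases Nat.lt_succ_iff_lt_or_eq.1 hj with hj | rfl
    · exact hprio j hj
    · exact A.le_layerOf hlayer h

theorem IsSemRun.sub_le_longestSuffixLen (hρ : A.IsSemRun w p ρ) (hy : 1 ≤ y) {m : ℕ}
    (hm : y ≤ A.layer (ρ m)) (hprio : ∀ i, m ≤ i → y ≤ A.semPrio (ρ i) (w i)) (u0 : List α)
    {n : ℕ} (hn : m ≤ n) :
    n - m ≤ A.longestSuffixLen (u0 ++ wordPrefix w n) (A.muHat y (ρ n)) := by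
  obtain ⟨k, rfl⟩ := Nat.exists_eq_add_of_le hn
  obtain ⟨hlayer, hrun⟩ := hρ.runList_muHat hy hm (k := k) fun j _ => hprio (m + j) (by omega)
  refine A.le_longestSuffixLen (by simp; omega) ⟨A.muHat y (ρ m), ?_, ?_⟩
  · rw [A.layer_muHat hy hm, A.layer_muHat hy hlayer]
  · rwa [wordPrefix_add, ← List.append_assoc, List.drop_left' (by simp; omega)]

theorem IsSemRun.le_semPrio_of_isSome_runList_drop (hρ : A.IsSemRun w p ρ) (hy : 1 ≤ y)
    {u0 : List α} {s i k : ℕ} {r : Q} (hi : y ≤ A.layer (ρ i)) (hs : s ≤ u0.length + i)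
    (hr : A.runList r ((u0 ++ wordPrefix w i).drop s) = some (A.muHat y (ρ i)))
    (h : (A.runList r ((u0 ++ wordPrefix w (i + (k + 1))).drop s)).isSome) :
    y ≤ A.semPrio (ρ (i + k)) (w (i + k)) := by
  rw [wordPrefix_add, ← List.append_assoc, List.drop_append_of_le_length (by simpa),
    A.runList_append, hr] at h
  exact hρ.le_semPrio_of_isSome_runList hy hi h k (by omega)

theorem IsLongestSuffixResolverE.longestSuffixLen_le {u0 : List α} {σ : List (Q × α) → Q → α → Q}
    (hσ : A.IsLongestSuffixResolverE u0 σ) (hcons : A.ConsEve σ w ρ) {n : ℕ}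
    (hodd : Odd (A.semPrio (ρ n) (w n))) {q : Q} (hq : A.semStep (ρ n) (w n) q) :
    A.longestSuffixLen (u0 ++ wordPrefix w (n + 1)) (A.muHat (A.semPrio (ρ n) (w n) + 1) q) ≤
      A.longestSuffixLen (u0 ++ wordPrefix w (n + 1))
        (A.muHat (A.semPrio (ρ n) (w n) + 1) (ρ (n + 1))) := by
  have hword : u0 ++ (List.ofFn fun j : Fin n => (ρ j, w j)).map Prod.snd ++ [w n] =
      u0 ++ wordPrefix w (n + 1) := by
    rw [wordPrefix_succ, List.map_ofFn, List.append_assoc]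
    rfl
  have := hσ.2 (List.ofFn fun j : Fin n => (ρ j, w j)) _ _ hodd q hq
  rwa [← hcons n hodd, hword] at this

theorem exists_runList_drop_of_semPrio_eq {u0 : List α} {σ : List (Q × α) → Q → α → Q}
    (hσ : A.IsLongestSuffixResolverE u0 σ) {x : ℕ} (hx : 1 ≤ x) (hodd : Odd x) {ρ0 : ℕ → Q}
    (hρ0 : A.IsSemRun w p ρ0) (hρ : A.IsSemRun w p ρ) (hcons : A.ConsEve σ w ρ)
    (hx0 : ∀ i, x ≤ A.semPrio (ρ0 i) (w i)) {m : ℕ}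
    (hx1 : ∀ i, m ≤ i → x + 1 ≤ A.semPrio (ρ0 i) (w i)) {n : ℕ} (hn : m ≤ n)
    (hxn : A.semPrio (ρ n) (w n) = x) :
    x + 1 ≤ A.layer (ρ (n + 1)) ∧ ∃ s ≤ u0.length + m, ∃ r,
      A.runList r ((u0 ++ wordPrefix w (n + 1)).drop s) = some (A.muHat (x + 1) (ρ (n + 1))) := by
  have hlayer0 : ∀ i, m ≤ i → x + 1 ≤ A.layer (ρ0 i) :=
    fun i hi => (hx1 i hi).trans (A.layerOf_le _ _)
  have hagree := (hρ.muHat_eq hρ0 hx hx0 (n + 1)).2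
  -- Eve's candidate: a leaf above the reference run's state in layer `x + 1`
  obtain ⟨l, hl, hl_layer, hl_eq⟩ := A.exists_isLeaf_muHat_eq (A.muHat (x + 1) (ρ0 (n + 1)))
  rw [A.layer_muHat (by omega) (hlayer0 _ (by omega))] at hl_layer hl_eq
  have hlx : A.muHat x l = A.muHat x (ρ0 (n + 1)) := by
    rw [← A.μ_muHat_succ hl_layer, hl_eq, A.μ_muHat_succ (hlayer0 _ (by omega))]
  have hl_step : A.semStep (ρ n) (w n) l := by
    refine ⟨hl, ?_⟩
    rw [show A.layerOf (ρ n) (w n) = x from hxn, hlx, (hρ.muHat_eq hρ0 hx hx0 n).2]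
    exact A.δ_muHat_of_semStep (hρ0.2 n) hx (hx0 n)
  have hchoice := hσ.longestSuffixLen_le hcons (hxn ▸ hodd) hl_step
  rw [hxn, hl_eq] at hchoice
  have href := hρ0.sub_le_longestSuffixLen (by omega) (hlayer0 m le_rfl) hx1 u0
    (show m ≤ n + 1 by omega)
  have hlen := A.longestSuffixLen_le_length (u0 ++ wordPrefix w (n + 1))
    (A.muHat (x + 1) (ρ (n + 1)))
  obtain ⟨r, -, hr⟩ := A.suffixReaches_longestSuffixLen (u0 ++ wordPrefix w (n + 1))
    (A.muHat (x + 1) (ρ (n + 1)))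
  refine ⟨?_, _, ?_, r, hr⟩
  · refine (hρ.2 n).1.lt_layer (r := A.muHat (x + 1) (ρ0 (n + 1))) ?_ ?_
    · rw [A.layer_muHat (by omega) (hlayer0 _ (by omega))]
      omega
    · rw [A.μ_muHat_succ (hlayer0 _ (by omega)), hagree]
  · simp only [List.length_append, length_wordPrefix] at hlen ⊢
    omega

theorem finite_setOf_semPrio_eq [Finite Q] {u0 : List α} {σ : List (Q × α) → Q → α → Q}
    (hσ : A.IsLongestSuffixResolverE u0 σ) {x : ℕ} (hx : 1 ≤ x) (hodd : Odd x) {ρ0 : ℕ → Q}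
    (hρ0 : A.IsSemRun w p ρ0) (hρ : A.IsSemRun w p ρ) (hcons : A.ConsEve σ w ρ)
    (hx0 : ∀ i, x ≤ A.semPrio (ρ0 i) (w i)) {m : ℕ}
    (hx1 : ∀ i, m ≤ i → x + 1 ≤ A.semPrio (ρ0 i) (w i)) :
    {n | m ≤ n ∧ A.semPrio (ρ n) (w n) = x}.Finite := by
  by_contra hinf
  have hreset := fun n (hn : n ∈ {n | m ≤ n ∧ A.semPrio (ρ n) (w n) = x}) =>
    exists_runList_drop_of_semPrio_eq hσ hx hodd hρ0 hρ hcons hx0 hx1 hn.1 hn.2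
  have : Nonempty Q := ⟨p⟩
  choose! s hs r hr using fun n hn => (hreset n hn).2
  obtain ⟨a, ha, b, hb, hab, hsr⟩ := Set.Infinite.exists_lt_map_eq_of_mapsTo hinf
    (f := fun n => (s n, r n)) (t := Set.Iic (u0.length + m) ×ˢ Set.univ)
    (fun n hn => ⟨hs n hn, trivial⟩) ((Set.finite_Iic _).prod Set.finite_univ)
  obtain ⟨hsab, hrab⟩ := Prod.mk.inj hsr
  obtain ⟨k, rfl⟩ := Nat.exists_eq_add_of_lt hab
  have hthread := hr _ hb
  rw [← hsab, ← hrab, show a + k + 1 + 1 = a + 1 + (k + 1) by omega] at hthread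
  have hprio := hρ.le_semPrio_of_isSome_runList_drop (by omega) (hreset a ha).1
    (by have := hs a ha; have := ha.1; omega) (hr a ha) (by rw [hthread]; rfl)
  have hxb := hb.2
  rw [show a + 1 + k = a + k + 1 by omega] at hprio
  omega

end Runs

end Layered

theorem statement_5_general {Q α : Type} [Fintype Q] {d : ℕ}
    (A : Layered Q α d) (p : Q)
    (x : ℕ) (hx1 : 1 ≤ x) (hodd : Odd x)
    (u : List α) (wt : ℕ → α) (ρ0 : ℕ → Q)
    (hrun : A.IsSemRun (prependW u wt) p ρ0)
    (hu : ∀ i : ℕ, i < u.length → x ≤ A.semPrio (ρ0 i) (prependW u wt i))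
    (hw : ∀ i : ℕ, u.length ≤ i → x + 1 ≤ A.semPrio (ρ0 i) (prependW u wt i))
    (u0 : List α) (σ : List (Q × α) → Q → α → Q)
    (hσ : A.IsLongestSuffixResolverE u0 σ) :
    ∀ ρ : ℕ → Q, A.IsSemRun (prependW u wt) p ρ → A.ConsEve σ (prependW u wt) ρ →
      ∃ N : ℕ, ∀ n : ℕ, N ≤ n → x + 1 ≤ A.semPrio (ρ n) (prependW u wt n) := by
  intro ρ hρ hcons
  have hx0 : ∀ i, x ≤ A.semPrio (ρ0 i) (prependW u wt i) := fun i =>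
    if hi : i < u.length then hu i hi else (hw i (by omega)).trans' (Nat.le_succ x)
  obtain ⟨N, hN⟩ := (Layered.finite_setOf_semPrio_eq hσ hx1 hodd hrun hρ hcons hx0 hw).bddAbove
  refine ⟨max u.length (N + 1), fun n hn => ?_⟩
  have hprio := hρ.le_semPrio hrun hx1 hx0 n
  have hne : A.semPrio (ρ n) (prependW u wt n) ≠ x := fun h =>
    absurd (hN ⟨le_of_max_le_left hn, h⟩) (by omega)
  omega

/-- Let `x` be odd and suppose `w = u·w̃` admits a run of `⟦A⟧` from the
leaf state `p` with priorities `≥ x` along `u` and `≥ x+1` afterwards.  Then for every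
`u₀`, every longest suffix resolver for Eve initialised to `u₀` ensures that on every
consistent run over `w` from `p`, eventually all transitions have priority `≥ x+1`. -/
theorem statement_5 {Q α : Type} [Fintype Q] [Fintype α] [Nonempty α] {d : ℕ} (hd : 1 ≤ d)
    (A : Layered Q α d) (p : Q) (hp : A.IsLeaf p)
    (x : ℕ) (hx1 : 1 ≤ x) (hxd : x ≤ d) (hodd : Odd x)
    (u : List α) (wt : ℕ → α) (ρ0 : ℕ → Q)
    (hrun : A.IsSemRun (prependW u wt) p ρ0)
    (hu : ∀ i : ℕ, i < u.length → x ≤ A.semPrio (ρ0 i) (prependW u wt i))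
    (hw : ∀ i : ℕ, u.length ≤ i → x + 1 ≤ A.semPrio (ρ0 i) (prependW u wt i))
    (u0 : List α) (σ : List (Q × α) → Q → α → Q)
    (hσ : A.IsLongestSuffixResolverE u0 σ) :
    ∀ ρ : ℕ → Q, A.IsSemRun (prependW u wt) p ρ → A.ConsEve σ (prependW u wt) ρ →
      ∃ N : ℕ, ∀ n : ℕ, N ≤ n → x + 1 ≤ A.semPrio (ρ n) (prependW u wt n) :=
  statement_5_general A p x hx1 hodd u wt ρ0 hrun hu hw u0 σ hσ
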